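/- Fix ε ∈ (0,1) and for n ≥ 0 and k = 1,…,2^n set G_n(k) := G_ε ∩ [(k−1)2^{−n}, k·2^{−n}]. Then for all n and all k, G_n(k) = G_{n+1}(2k−1) ∪ G_{n+1}(2k), and G_n(k) is quasi self-similar: {2x − (k−1)2^{−n} : x ∈ G_{n+1}(2k−1)} ⊆ G_n(k) ⊆ {2x − k·2^{−n} : x ∈ G_{n+1}(2k)}. -/

import Mathlib

open Filter Set MeasureTheory

noncomputable section

/-- `g_0(z) = 2z - z²` (bit `false`), `g_1(z) = z²` (bit `true`). -/
def gBit (c : Bool) (z : ℝ) : ℝ := if c then z ^ 2 else 2 * z - z ^ 2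

/-- `pPre b n z = g_{b_n}(g_{b_{n-1}}(⋯ g_{b_1}(z) ⋯))`, where `b_i` is `b (i-1)`. -/
def pPre (b : ℕ → Bool) : ℕ → ℝ → ℝ
  | 0, z => z
  | n + 1, z => gBit (b n) (pPre b n z)

/-- `f(b) = Σ_{n ≥ 1} b_n 2^{-n}`. -/
def fBin (b : ℕ → Bool) : ℝ := ∑' n : ℕ, (if b n then (1 : ℝ) else 0) / 2 ^ (n + 1)

/-- The dyadic rationals in `[0,1]`. -/
def dyadics : Set ℝ := Set.Icc 0 1 ∩ {x : ℝ | ∃ (p : ℤ) (n : ℕ), x = (p : ℝ) / 2 ^ n}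

/-- The good channels of a BEC with erasure probability `ε`: `x ∈ [0,1]` such that some binary
expansion `b` of `x` satisfies `p_{b^n}(ε) → 0`. -/
def Gset (ε : ℝ) : Set ℝ :=
  {x : ℝ | ∃ b : ℕ → Bool, fBin b = x ∧ Tendsto (fun n => pPre b n ε) atTop (nhds 0)}

/-- The bad channels of a BEC with erasure probability `ε`: `x ∈ [0,1]` such that some binary
expansion `b` of `x` satisfies `p_{b^n}(ε) → 1`. -/
def Bset (ε : ℝ) : Set ℝ :=
  {x : ℝ | ∃ b : ℕ → Bool, fBin b = x ∧ Tendsto (fun n => pPre b n ε) atTop (nhds 1)}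

/-- Hamming weight `w(b^n)` of the length-`n` prefix of `b`. -/
def wPre (b : ℕ → Bool) (n : ℕ) : ℕ := ∑ i ∈ Finset.range n, (if b i then 1 else 0)

/-- `b` is `ρ`-heavy: `liminf_{n→∞} (w(b^n) - nρ) ≥ 0` (the liminf computed in `EReal`),
equivalently `liminf 2^{w(b^n)} / 2^{nρ} ≥ 1`. -/
def Heavy (ρ : ℝ) (b : ℕ → Bool) : Prop :=
  0 ≤ atTop.liminf (fun n : ℕ => (((wPre b n : ℝ) - n * ρ : ℝ) : EReal))

/-- The set of `ρ`-heavy channels. -/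
def Hset (ρ : ℝ) : Set ℝ := {x : ℝ | ∃ b : ℕ → Bool, fBin b = x ∧ Heavy ρ b}

/-- `G_n(k) = G_ε ∩ [(k-1)2^{-n}, k 2^{-n}]`. -/
def GnSet (ε : ℝ) (n k : ℕ) : Set ℝ :=
  Gset ε ∩ Set.Icc (((k : ℝ) - 1) / 2 ^ n) ((k : ℝ) / 2 ^ n)

/-!
Deleting the first binary digit `c` from an expansion that is good for `ε` leaves one that is good
for `g_c(ε)`, and conversely, so `G_ε = ½ G_{g₀(ε)} ∪ (½ + ½ G_{g₁(ε)})`. On binary expansions, the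
two maps of the statement delete a `0`, respectively insert a `1`, right after the first `n`
digits. Every `p_{b^m}` is monotone on `[0, 1]` and `g₁(z) ≤ z ≤ g₀(z)`, so this can only make
`p_{b^m}(ε)` smaller; an induction on `n` through the decomposition of `G_ε` makes this precise.
Dyadic points, which have two expansions, cause no trouble: an expansion ending in `1^∞` is good
for every `ε < 1`.
-/

lemma gBit_mapsTo (c : Bool) : MapsTo (gBit c) (Icc 0 1) (Icc 0 1) := by
  rintro z ⟨h0, h1⟩
  cases c <;> simp only [gBit, Bool.false_eq_true, if_true, if_false, mem_Icc] <;>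
    constructor <;> nlinarith

lemma gBit_mapsTo_Ico (c : Bool) : MapsTo (gBit c) (Ico 0 1) (Ico 0 1) := by
  rintro z ⟨h0, h1⟩
  cases c <;> simp only [gBit, Bool.false_eq_true, if_true, if_false, mem_Ico] <;>
    constructor <;> nlinarith

lemma gBit_monotoneOn (c : Bool) : MonotoneOn (gBit c) (Icc 0 1) := by
  rintro z ⟨hz0, -⟩ w ⟨-, hw1⟩ hzw
  cases c <;> simp only [gBit, Bool.false_eq_true, if_true, if_false] <;> nlinarith

lemma gBit_true_le {z : ℝ} (hz : z ∈ Icc 0 1) : gBit true z ≤ z := by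
  simp only [gBit, if_true]; nlinarith [hz.1, hz.2]

lemma le_gBit_false {z : ℝ} (hz : z ∈ Icc 0 1) : z ≤ gBit false z := by
  simp only [gBit, Bool.false_eq_true, if_false]; nlinarith [hz.1, hz.2]

lemma pPre_mapsTo (b : ℕ → Bool) (n : ℕ) : MapsTo (pPre b n) (Icc 0 1) (Icc 0 1) := by
  induction n with
  | zero => exact mapsTo_id _
  | succ n ih => exact (gBit_mapsTo (b n)).comp ih

lemma pPre_monotoneOn (b : ℕ → Bool) (n : ℕ) : MonotoneOn (pPre b n) (Icc 0 1) := by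
  induction n with
  | zero => exact monotoneOn_id
  | succ n ih => exact (gBit_monotoneOn (b n)).comp ih (pPre_mapsTo b n)

lemma pPre_succ' (b : ℕ → Bool) (n : ℕ) (z : ℝ) :
    pPre b (n + 1) z = pPre (fun i => b (i + 1)) n (gBit (b 0) z) := by
  induction n with
  | zero => rfl
  | succ n ih => rw [pPre, ih]; rfl

lemma pPre_const_true (n : ℕ) (z : ℝ) : pPre (fun _ => true) n z = z ^ 2 ^ n := by
  induction n with
  | zero => simp [pPre]
  | succ n ih => rw [pPre, ih, gBit, if_pos rfl, ← pow_mul, pow_succ]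

lemma fBin_eq_ofDigits (b : ℕ → Bool) :
    fBin b = Real.ofDigits (fun i => if b i then (1 : Fin 2) else 0) := by
  refine tsum_congr fun i => ?_
  simp only [Real.ofDigitsTerm]
  split_ifs <;> simp [div_eq_mul_inv]

lemma fBin_mem_Icc (b : ℕ → Bool) : fBin b ∈ Icc 0 1 := by
  rw [fBin_eq_ofDigits]
  exact ⟨Real.ofDigits_nonneg _, Real.ofDigits_le_one _⟩

lemma fBin_eq_half (b : ℕ → Bool) :
    fBin b = ((if b 0 then 1 else 0) + fBin (fun i => b (i + 1))) / 2 := by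
  rw [fBin_eq_ofDigits, fBin_eq_ofDigits, Real.ofDigits_eq_sum_add_ofDigits _ 1]
  cases h : b 0 <;> simp [h, Real.ofDigitsTerm, div_eq_inv_mul, mul_add]

lemma fBin_cons (c : Bool) (b : ℕ → Bool) :
    fBin (Stream'.cons c b) = ((if c then 1 else 0) + fBin b) / 2 :=
  fBin_eq_half _

lemma fBin_const_true : fBin (fun _ => true) = 1 := by
  rw [fBin_eq_ofDigits]
  exact Real.ofDigits_const_last_eq_one 1

lemma tendsto_pPre_iff_tail {b : ℕ → Bool} {ε : ℝ} :
    Tendsto (fun n => pPre b n ε) atTop (nhds 0) ↔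
      Tendsto (fun n => pPre (fun i => b (i + 1)) n (gBit (b 0) ε)) atTop (nhds 0) := by
  rw [← tendsto_add_atTop_iff_nat 1]
  simp only [pPre_succ']

lemma Gset_subset_Icc (ε : ℝ) : Gset ε ⊆ Icc 0 1 := by
  rintro _ ⟨b, rfl, -⟩
  exact fBin_mem_Icc b

lemma Gset_antitoneOn : AntitoneOn Gset (Icc 0 1) := by
  rintro δ hδ ε hε hle _ ⟨b, rfl, hb⟩
  exact ⟨b, rfl, squeeze_zero (fun n => (pPre_mapsTo b n hδ).1)
    (fun n => pPre_monotoneOn b n hδ hε hle) hb⟩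

lemma mem_Gset_iff {ε x : ℝ} :
    x ∈ Gset ε ↔ 2 * x ∈ Gset (gBit false ε) ∨ 2 * x - 1 ∈ Gset (gBit true ε) := by
  constructor
  · rintro ⟨b, rfl, hb⟩
    rw [tendsto_pPre_iff_tail] at hb
    rw [fBin_eq_half]
    cases h : b 0
    · refine Or.inl ⟨fun i => b (i + 1), ?_, by simpa [h] using hb⟩
      rw [if_neg Bool.false_ne_true]
      ring
    · refine Or.inr ⟨fun i => b (i + 1), ?_, by simpa [h] using hb⟩
      rw [if_pos rfl]
      ring
  · rintro (⟨b, hb, h⟩ | ⟨b, hb, h⟩)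
    · refine ⟨Stream'.cons false b, ?_, tendsto_pPre_iff_tail.mpr h⟩
      rw [fBin_cons, hb]
      simp
    · refine ⟨Stream'.cons true b, ?_, tendsto_pPre_iff_tail.mpr h⟩
      rw [fBin_cons, hb]
      simp

lemma one_mem_Gset {ε : ℝ} (hε : ε ∈ Ico 0 1) : (1 : ℝ) ∈ Gset ε := by
  refine ⟨fun _ => true, fBin_const_true, ?_⟩
  simp_rw [pPre_const_true]
  exact (tendsto_pow_atTop_nhds_zero_of_lt_one hε.1 hε.2).comp
    (tendsto_pow_atTop_atTop_of_one_lt one_lt_two)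

/-- For `j < 2 ^ n` and `t ∈ [0, 1]`, the binary expansion of `dyadicMap n j t` is the `n`-digit
expansion of `j` followed by one of `t`. -/
def dyadicMap (n j : ℕ) (t : ℝ) : ℝ := (j + t) / 2 ^ n

lemma dyadicMap_zero_zero (t : ℝ) : dyadicMap 0 0 t = t := by
  simp [dyadicMap]

lemma two_mul_dyadicMap_succ (n j : ℕ) (t : ℝ) :
    2 * dyadicMap (n + 1) j t = dyadicMap n j t := by
  simp only [dyadicMap, pow_succ]
  field_simp

lemma two_mul_dyadicMap_succ_sub_one (n j : ℕ) (t : ℝ) :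
    2 * dyadicMap (n + 1) (2 ^ n + j) t - 1 = dyadicMap n j t := by
  simp only [dyadicMap, pow_succ]
  push_cast
  field_simp
  ring

lemma dyadicMap_succ_two_mul (n j : ℕ) (t : ℝ) :
    dyadicMap (n + 1) (2 * j) t = dyadicMap n j (t / 2) := by
  simp only [dyadicMap, pow_succ]
  push_cast
  field_simp

lemma dyadicMap_succ_two_mul_add_one (n j : ℕ) (t : ℝ) :
    dyadicMap (n + 1) (2 * j + 1) t = dyadicMap n j ((1 + t) / 2) := by
  simp only [dyadicMap, pow_succ]
  push_cast
  field_simp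
  ring

lemma two_mul_dyadicMap_succ_two_mul_sub (n j : ℕ) (t : ℝ) :
    2 * dyadicMap (n + 1) (2 * j) t - j / 2 ^ n = dyadicMap n j t := by
  simp only [dyadicMap, pow_succ]
  push_cast
  field_simp
  ring

lemma two_mul_dyadicMap_succ_two_mul_add_one_sub (n j : ℕ) (t : ℝ) :
    2 * dyadicMap (n + 1) (2 * j + 1) t - (j + 1) / 2 ^ n = dyadicMap n j t := by
  simp only [dyadicMap, pow_succ]
  push_cast
  field_simp
  ring

lemma dyadicMap_lt_one {n j : ℕ} (hj : j < 2 ^ n) {t : ℝ} (ht : t < 1) :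
    dyadicMap n j t < 1 := by
  have hj' : (j : ℝ) + 1 ≤ 2 ^ n := by exact_mod_cast hj
  rw [dyadicMap, div_lt_one (by positivity)]
  linarith

lemma one_lt_dyadicMap_two_pow_add (n j : ℕ) {t : ℝ} (ht : 0 < t) :
    1 < dyadicMap n (2 ^ n + j) t := by
  rw [dyadicMap, one_lt_div (by positivity)]
  push_cast
  linarith [(Nat.cast_nonneg j : (0 : ℝ) ≤ j)]

lemma lt_or_exists_eq_two_pow_add {n j : ℕ} (hj : j < 2 ^ (n + 1)) :
    j < 2 ^ n ∨ ∃ i < 2 ^ n, j = 2 ^ n + i := by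
  rw [pow_succ] at hj
  rcases lt_or_ge j (2 ^ n) with h | h
  · exact Or.inl h
  · exact Or.inr ⟨j - 2 ^ n, by omega, by omega⟩

lemma dyadicMap_mem_Gset {t : ℝ} (ht : ∀ δ ∈ Ico (0 : ℝ) 1, t ∈ Gset δ) {n j : ℕ}
    (hj : j < 2 ^ n) {ε : ℝ} (hε : ε ∈ Ico 0 1) : dyadicMap n j t ∈ Gset ε := by
  induction n generalizing j ε with
  | zero =>
    obtain rfl : j = 0 := by simpa using hj
    simpa [dyadicMap_zero_zero] using ht ε hε
  | succ n ih =>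
    rw [mem_Gset_iff]
    rcases lt_or_exists_eq_two_pow_add hj with hj | ⟨i, hi, rfl⟩
    · rw [two_mul_dyadicMap_succ]
      exact Or.inl (ih hj (gBit_mapsTo_Ico _ hε))
    · rw [two_mul_dyadicMap_succ_sub_one]
      exact Or.inr (ih hi (gBit_mapsTo_Ico _ hε))

/-- When `s` is an endpoint of `[0, 1]`, `dyadicMap n j s` has a second binary expansion, not
beginning with the digits of `j`; this is what `hend` takes care of. -/
lemma dyadicMap_mem_Gset_of_imp {s t : ℝ} (hst : ∀ δ ∈ Ico (0 : ℝ) 1, s ∈ Gset δ → t ∈ Gset δ)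
    (hend : s ∉ Ioo 0 1 → t = s ∨ ∀ δ ∈ Ico (0 : ℝ) 1, t ∈ Gset δ) {n j : ℕ} (hj : j < 2 ^ n)
    {ε : ℝ} (hε : ε ∈ Ico 0 1) (h : dyadicMap n j s ∈ Gset ε) : dyadicMap n j t ∈ Gset ε := by
  induction n generalizing j ε with
  | zero =>
    obtain rfl : j = 0 := by simpa using hj
    rw [dyadicMap_zero_zero] at h ⊢
    exact hst ε hε h
  | succ n ih =>
    by_cases hs : s ∉ Ioo 0 1
    · rcases hend hs with rfl | ht
      exacts [h, dyadicMap_mem_Gset ht hj hε]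
    rw [not_not] at hs
    rw [mem_Gset_iff] at h ⊢
    rcases lt_or_exists_eq_two_pow_add hj with hj | ⟨i, hi, rfl⟩
    · rw [two_mul_dyadicMap_succ] at h ⊢
      refine Or.inl (ih hj (gBit_mapsTo_Ico _ hε) (h.resolve_right fun h' => ?_))
      linarith [(Gset_subset_Icc _ h').1, dyadicMap_lt_one hj hs.2]
    · rw [two_mul_dyadicMap_succ_sub_one] at h ⊢
      refine Or.inr (ih hi (gBit_mapsTo_Ico _ hε) (h.resolve_left fun h' => ?_))
      rw [two_mul_dyadicMap_succ] at h'
      linarith [(Gset_subset_Icc _ h').2, one_lt_dyadicMap_two_pow_add n i hs.1]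

lemma dyadicMap_insert_one_mem_Gset {t : ℝ} (ht : t ∈ Icc 0 1) {n j : ℕ} (hj : j < 2 ^ n)
    {ε : ℝ} (hε : ε ∈ Ico 0 1) (h : dyadicMap n j t ∈ Gset ε) :
    dyadicMap n j ((1 + t) / 2) ∈ Gset ε := by
  refine dyadicMap_mem_Gset_of_imp (fun δ hδ htδ => ?_) (fun hs => ?_) hj hε h
  · have hδ' := Ico_subset_Icc_self hδ
    refine mem_Gset_iff.mpr (Or.inr ?_)
    rw [show 2 * ((1 + t) / 2) - 1 = t by ring]
    exact Gset_antitoneOn (gBit_mapsTo _ hδ') hδ' (gBit_true_le hδ') htδ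
  · obtain rfl | rfl : t = 0 ∨ t = 1 := by
      by_contra! h01
      exact hs ⟨lt_of_le_of_ne ht.1 h01.1.symm, lt_of_le_of_ne ht.2 h01.2⟩
    · refine Or.inr fun δ hδ => mem_Gset_iff.mpr (Or.inl ?_)
      rw [mul_div_cancel₀ _ two_ne_zero, add_zero]
      exact one_mem_Gset (gBit_mapsTo_Ico _ hδ)
    · norm_num

lemma dyadicMap_delete_zero_mem_Gset {t : ℝ} (ht : t ∈ Icc 0 1) {n j : ℕ} (hj : j < 2 ^ n)
    {ε : ℝ} (hε : ε ∈ Ico 0 1) (h : dyadicMap n j (t / 2) ∈ Gset ε) :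
    dyadicMap n j t ∈ Gset ε := by
  refine dyadicMap_mem_Gset_of_imp (fun δ hδ htδ => ?_) (fun hs => Or.inl ?_) hj hε h
  · have hδ' := Ico_subset_Icc_self hδ
    rcases mem_Gset_iff.mp htδ with h0 | h1
    · rw [mul_div_cancel₀ t two_ne_zero] at h0
      exact Gset_antitoneOn hδ' (gBit_mapsTo _ hδ') (le_gBit_false hδ') h0
    · obtain rfl : t = 1 := by linarith [(Gset_subset_Icc _ h1).1, ht.2]
      exact one_mem_Gset hδ
  · have h0 : t / 2 ≤ 0 := not_lt.mp fun hpos => hs ⟨hpos, by linarith [ht.2]⟩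
    linarith [ht.1]

lemma image_dyadicMap_Icc (n j : ℕ) :
    dyadicMap n j '' Icc 0 1 = Icc ((j : ℝ) / 2 ^ n) ((j + 1) / 2 ^ n) := by
  have : dyadicMap n j = fun t : ℝ => (2 ^ n : ℝ)⁻¹ * t + j / 2 ^ n := by
    funext t
    rw [dyadicMap]
    ring
  rw [this, image_affine_Icc' (by positivity)]
  congr 1 <;> ring

lemma image_dyadicMap_Icc_eq_union (n j : ℕ) :
    dyadicMap n j '' Icc 0 1 =
      dyadicMap (n + 1) (2 * j) '' Icc 0 1 ∪ dyadicMap (n + 1) (2 * j + 1) '' Icc 0 1 := by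
  simp only [image_dyadicMap_Icc]
  push_cast
  rw [Icc_union_Icc_eq_Icc (by gcongr; linarith) (by gcongr; linarith), pow_succ]
  congr 1 <;> field_simp
  ring

lemma GnSet_add_one (ε : ℝ) (n j : ℕ) : GnSet ε n (j + 1) = Gset ε ∩ dyadicMap n j '' Icc 0 1 := by
  rw [GnSet, image_dyadicMap_Icc]
  push_cast
  rw [add_sub_cancel_right]

/-- Quasi self-similarity of the set of good channels:
`G_n(k) = G_{n+1}(2k-1) ∪ G_{n+1}(2k)` and
`2·G_{n+1}(2k-1) - (k-1)2^{-n} ⊆ G_n(k) ⊆ 2·G_{n+1}(2k) - k·2^{-n}`. -/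
theorem good_quasi_self_similar (ε : ℝ) (hε : ε ∈ Set.Ioo (0 : ℝ) 1) (n k : ℕ)
    (hk1 : 1 ≤ k) (hk2 : k ≤ 2 ^ n) :
    GnSet ε n k = GnSet ε (n + 1) (2 * k - 1) ∪ GnSet ε (n + 1) (2 * k) ∧
    (fun x => 2 * x - ((k : ℝ) - 1) / 2 ^ n) '' GnSet ε (n + 1) (2 * k - 1) ⊆ GnSet ε n k ∧
    GnSet ε n k ⊆ (fun x => 2 * x - (k : ℝ) / 2 ^ n) '' GnSet ε (n + 1) (2 * k) := by
  obtain ⟨j, rfl⟩ : ∃ j, k = j + 1 := ⟨k - 1, by omega⟩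
  have hj : j < 2 ^ n := by omega
  have hε' : ε ∈ Ico 0 1 := Ioo_subset_Ico_self hε
  rw [show 2 * (j + 1) - 1 = 2 * j + 1 by omega, show 2 * (j + 1) = 2 * j + 1 + 1 by ring]
  simp only [GnSet_add_one, Nat.cast_add, Nat.cast_one, add_sub_cancel_right]
  refine ⟨?_, ?_, ?_⟩
  · rw [← inter_union_distrib_left, image_dyadicMap_Icc_eq_union]
  · rintro _ ⟨_, ⟨hG, t, ht, rfl⟩, rfl⟩
    rw [dyadicMap_succ_two_mul] at hG
    beta_reduce
    rw [two_mul_dyadicMap_succ_two_mul_sub]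
    exact ⟨dyadicMap_delete_zero_mem_Gset ht hj hε' hG, t, ht, rfl⟩
  · rintro _ ⟨hG, t, ht, rfl⟩
    refine ⟨dyadicMap (n + 1) (2 * j + 1) t, ⟨?_, t, ht, rfl⟩,
      two_mul_dyadicMap_succ_two_mul_add_one_sub n j t⟩
    rw [dyadicMap_succ_two_mul_add_one]
    exact dyadicMap_insert_one_mem_Gset ht hj hε' hG

end
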